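/- arXiv:2106.09561 — 2 statements merged into one kernel-verified Lean document; each statement's English description precedes it below -/
import Mathlib

section
/- Let G be a group and X a Cayley hyperset of G. The Cayley dihypergraph CD(G,X) is connected if and only if G is generated by the union of all elements of X, i.e., G = ⟨⋃_{x ∈ X} x⟩. Here CD(G,X) is connected means: for any two vertices u, v ∈ G, the pair (u,v) lies in the equivalence relation generated by the relation R, where R(a,b) holds if and only if there exist g ∈ G and x ∈ X with a ∈ x·g and b ∈ x·g. -/
/-- Right translation of a subset: `x·g = {s*g : s ∈ x}`. -/
def smulR {G : Type*} [Group G] (x : Set G) (g : G) : Set G := (fun s => s * g) '' x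

/-- Arc set of the Cayley dihypergraph `CD(G,X)`. -/
def CDarcs {G : Type*} [Group G] (X : Set (Set G)) : Set (G × Set G) :=
  {p | ∃ g : G, ∃ x ∈ X, p = (g, smulR x g)}

/-- `σ` is an automorphism of the dihypergraph with arc set `D`. -/
def IsDHAut {V : Type*} (D : Set (V × Set V)) (σ : Equiv.Perm V) : Prop :=
  ∀ (v : V) (e : Set V), (v, e) ∈ D ↔ (σ v, σ '' e) ∈ D


theorem stmt_2 {G : Type*} [Group G] (X : Set (Set G))
    (hX : ∀ x ∈ X, (1 : G) ∈ x) :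
    (∀ u v : G,
      Relation.EqvGen
        (fun a b => ∃ g : G, ∃ x ∈ X, a ∈ smulR x g ∧ b ∈ smulR x g) u v) ↔
    Subgroup.closure (⋃ x ∈ X, x) = (⊤ : Subgroup G) := by
  set R : G → G → Prop :=
    fun a b => ∃ g : G, ∃ x ∈ X, a ∈ smulR x g ∧ b ∈ smulR x g with hR
  have Rinv : ∀ a b c : G, R a b → R (a * c) (b * c) := by
    rintro a b c ⟨g, x, hx, ⟨s, hs, rfl⟩, ⟨t, ht, rfl⟩⟩
    exact ⟨g * c, x, hx, ⟨s, hs, (mul_assoc _ _ _).symm⟩,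
      ⟨t, ht, (mul_assoc _ _ _).symm⟩⟩
  have Einv : ∀ a b c : G, Relation.EqvGen R a b →
      Relation.EqvGen R (a * c) (b * c) := by
    intro a b c h
    induction h with
    | rel p q hpq => exact Relation.EqvGen.rel _ _ (Rinv _ _ _ hpq)
    | refl p => exact Relation.EqvGen.refl _
    | symm p q _ ih => exact ih.symm _ _
    | trans p q r _ _ ih1 ih2 => exact ih1.trans _ _ _ ih2
  constructor
  · intro hconn
    rw [eq_top_iff]
    intro g _
    have Rstep : ∀ a b : G, R a b →
        (a ∈ Subgroup.closure (⋃ x ∈ X, x) ↔ b ∈ Subgroup.closure (⋃ x ∈ X, x)) := by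
      rintro a b ⟨g', x, hx, ⟨s, hs, rfl⟩, ⟨t, ht, rfl⟩⟩
      have hsc : s ∈ Subgroup.closure (⋃ x ∈ X, x) :=
        Subgroup.subset_closure (Set.mem_biUnion hx hs)
      have htc : t ∈ Subgroup.closure (⋃ x ∈ X, x) :=
        Subgroup.subset_closure (Set.mem_biUnion hx ht)
      dsimp only [smulR] at *
      constructor
      · intro hp
        have : t * g' = (t * s⁻¹) * (s * g') := by group
        rw [this]
        exact Subgroup.mul_mem _ (Subgroup.mul_mem _ htc (Subgroup.inv_mem _ hsc)) hp
      · intro hp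
        have : s * g' = (s * t⁻¹) * (t * g') := by group
        rw [this]
        exact Subgroup.mul_mem _ (Subgroup.mul_mem _ hsc (Subgroup.inv_mem _ htc)) hp
    have key : ∀ a b : G, Relation.EqvGen R a b →
        (a ∈ Subgroup.closure (⋃ x ∈ X, x) ↔ b ∈ Subgroup.closure (⋃ x ∈ X, x)) := by
      intro a b h
      induction h with
      | rel p q hpq => exact Rstep _ _ hpq
      | refl p => exact Iff.rfl
      | symm p q _ ih => exact ih.symm
      | trans p q r _ _ ih1 ih2 => exact ih1.trans ih2
    have h1 : (1 : G) ∈ Subgroup.closure (⋃ x ∈ X, x) := Subgroup.one_mem _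
    exact (key 1 g (hconn 1 g)).mp h1
  · intro htop u v
    have hmem : v * u⁻¹ ∈ Subgroup.closure (⋃ x ∈ X, x) := htop ▸ Subgroup.mem_top _
    have main : ∀ h ∈ Subgroup.closure (⋃ x ∈ X, x), Relation.EqvGen R u (h * u) := by
      intro h hh
      induction hh using Subgroup.closure_induction with
      | mem s hs =>
        obtain ⟨x, hxX, hsx⟩ := Set.mem_iUnion₂.mp hs
        refine Relation.EqvGen.rel _ _ ⟨u, x, hxX, ⟨1, hX x hxX, one_mul u⟩,
          ⟨s, hsx, rfl⟩⟩
      | one => rw [one_mul]; exact Relation.EqvGen.refl _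
      | mul a b _ _ iha ihb =>
        have h1 : Relation.EqvGen R (b * u) (a * (b * u)) := by
          have := Einv u (a * u) (u⁻¹ * (b * u)) iha
          simpa [mul_assoc] using this
        rw [mul_assoc]
        exact ihb.trans _ _ _ h1
      | inv a _ iha =>
        have h2 : Relation.EqvGen R (a * u) u := Relation.EqvGen.symm _ _ iha
        have := Einv (a * u) u (u⁻¹ * (a⁻¹ * u)) h2
        simpa [mul_assoc] using this
    have := main (v * u⁻¹) hmem
    simpa [mul_assoc] using this
end

section
/- Let G be a group and X a Cayley hyperset of G. The Cayley dihypergraph CD(G,X) is undirected if and only if X = {x·g⁻¹ : x ∈ X, g ∈ x}, i.e., X equals its Cayley closure [X]. -/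
/-- The Cayley closure `[X] = {x·g⁻¹ : x ∈ X, g ∈ x}`. -/
def cayleyCl {G : Type*} [Group G] (X : Set (Set G)) : Set (Set G) :=
  {y | ∃ x ∈ X, ∃ g ∈ x, y = smulR x g⁻¹}

/-- A dihypergraph with arc set `D` is undirected. -/
def Undirected {V : Type*} (D : Set (V × Set V)) : Prop :=
  ∀ p ∈ D, ∀ v ∈ p.2, (v, p.2) ∈ D

theorem stmt_3 {G : Type*} [Group G] (X : Set (Set G))
    (hX : ∀ x ∈ X, (1 : G) ∈ x) :
    Undirected (CDarcs X) ↔ X = cayleyCl X := by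
  have hsm : ∀ (x : Set G) (a b : G), smulR (smulR x a) b = smulR x (a * b) := by
    intro x a b; ext s; simp [smulR, mul_assoc]
  have hone : ∀ x : Set G, smulR x 1 = x := by
    intro x; ext s; simp [smulR]
  constructor
  · intro hU
    apply Set.Subset.antisymm
    · intro x hx
      exact ⟨x, hx, 1, hX x hx, by simp [hone]⟩
    · rintro y ⟨x, hx, g, hg, rfl⟩
      have h1 : ((1:G), x) ∈ CDarcs X := ⟨1, x, hx, by simp [hone]⟩
      have := hU _ h1 g hg
      obtain ⟨h, y, hy, heq⟩ := this
      obtain ⟨h1, h2⟩ := Prod.mk.injEq .. ▸ heq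
      subst h1
      have : smulR x g⁻¹ = y := by
        rw [show x = smulR y g from h2, hsm, mul_inv_cancel, hone]
      rw [this]; exact hy
  · rintro hEq ⟨h, e⟩ ⟨h', x, hx, heq⟩ v hv
    obtain ⟨hh, he⟩ := Prod.mk.injEq .. ▸ heq
    subst hh; subst he
    obtain ⟨s, hs, rfl⟩ := hv
    refine ⟨s * h, smulR x s⁻¹, ?_, ?_⟩
    · rw [hEq]; exact ⟨x, hx, s, hs, rfl⟩
    · simp [hsm, mul_assoc]
end
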